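/- ETKF covariance identity: let Ĉ = X̂ X̂ᵀ with X̂ ∈ ℝ^{n×K}, Γ ∈ ℝ^{m×m} symmetric positive definite, H ∈ ℝ^{m×n}, T = (I_K + (H X̂)ᵀ Γ⁻¹ (H X̂))⁻¹, S = H Ĉ Hᵀ + Γ, K_g = Ĉ Hᵀ S⁻¹, and X = X̂ T^{1/2} where T^{1/2} is the positive definite square root of T. Then X Xᵀ = (I_n − K_g H) Ĉ. -/

import Mathlib

open Matrix

namespace Matrix.PosSemidef

open scoped ComplexOrder

/-- The positive semidefinite square root, as defined in the older Mathlib (removed since). -/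
noncomputable def sqrt {n 𝕜 : Type*} [Fintype n] [RCLike 𝕜] [DecidableEq n] {A : Matrix n n 𝕜}
    (hA : A.PosSemidef) : Matrix n n 𝕜 :=
  (hA.1.eigenvectorUnitary : Matrix n n 𝕜) *
    diagonal ((↑) ∘ (fun x : ℝ => Real.sqrt x) ∘ hA.1.eigenvalues) *
    (star hA.1.eigenvectorUnitary : Matrix n n 𝕜)

end Matrix.PosSemidef

/-!
By the Woodbury identity, with `B = H X̂` and `S = B Bᵀ + Γ`, the transform matrix is
`T = (1 + Bᵀ Γ⁻¹ B)⁻¹ = 1 - Bᵀ S⁻¹ B`. Since `T^{1/2}` is symmetric and squares to `T`,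
`X Xᵀ = X̂ T X̂ᵀ = Ĉ - Ĉ Hᵀ S⁻¹ H Ĉ = (1 - K_g H) Ĉ`.
-/

namespace Matrix.PosSemidef

open scoped ComplexOrder

variable {n 𝕜 : Type*} [Fintype n] [RCLike 𝕜] [DecidableEq n] {A : Matrix n n 𝕜}

theorem sqrt_mul_self (hA : A.PosSemidef) : hA.sqrt * hA.sqrt = A := by
  have hU : (star hA.1.eigenvectorUnitary : Matrix n n 𝕜) * hA.1.eigenvectorUnitary = 1 :=
    Unitary.coe_star_mul_self _
  conv_rhs => rw [hA.1.spectral_theorem, Unitary.conjStarAlgAut_apply]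
  rw [sqrt]
  simp only [Matrix.mul_assoc]
  rw [← Matrix.mul_assoc (star _ : Matrix n n 𝕜), hU, Matrix.one_mul,
    ← Matrix.mul_assoc (diagonal _), diagonal_mul_diagonal]
  congr 3
  funext i
  simp [← RCLike.ofReal_mul, Real.mul_self_sqrt (hA.eigenvalues_nonneg i)]

theorem conjTranspose_sqrt (hA : A.PosSemidef) : hA.sqrtᴴ = hA.sqrt := by
  rw [sqrt, conjTranspose_mul, conjTranspose_mul, diagonal_conjTranspose, ← star_eq_conjTranspose,
    ← star_eq_conjTranspose, star_star, Matrix.mul_assoc]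
  congr 3
  funext i
  simp

end Matrix.PosSemidef

theorem Matrix.PosSemidef.mul_sqrt_mul_transpose {n k : Type*} [Fintype n] [DecidableEq n]
    {A : Matrix n n ℝ} (hA : A.PosSemidef) (Y : Matrix k n ℝ) :
    Y * hA.sqrt * (Y * hA.sqrt)ᵀ = Y * A * Yᵀ := by
  rw [← conjTranspose_eq_transpose_of_trivial, conjTranspose_mul, hA.conjTranspose_sqrt,
    Matrix.mul_assoc, ← Matrix.mul_assoc hA.sqrt, hA.sqrt_mul_self,
    conjTranspose_eq_transpose_of_trivial, Matrix.mul_assoc]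

theorem Matrix.one_add_mul_inv_mul_inv_eq_sub {m k α : Type*} [Fintype m] [DecidableEq m]
    [Fintype k] [DecidableEq k] [CommRing α] (U : Matrix k m α) (Γ : Matrix m m α)
    (V : Matrix m k α) (hΓ : IsUnit Γ) (hS : IsUnit (V * U + Γ)) :
    (1 + U * Γ⁻¹ * V)⁻¹ = 1 - U * (V * U + Γ)⁻¹ * V := by
  have hΓ_det : IsUnit Γ.det := (isUnit_iff_isUnit_det Γ).mp hΓ
  rw [add_mul_mul_inv_eq_sub _ _ _ _ isUnit_one (isUnit_nonsing_inv_iff.mpr hΓ),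
    nonsing_inv_nonsing_inv _ hΓ_det]
  · simp [add_comm]
  · simpa [nonsing_inv_nonsing_inv _ hΓ_det, add_comm] using hS

/-- ETKF covariance identity: with `X = X̂ T^{1/2}`, one has `X Xᵀ = (I − K_g H) Ĉ`. -/
theorem stmt9 {n m K : ℕ} (Γ : Matrix (Fin m) (Fin m) ℝ) (hΓ : Γ.PosDef)
    (H : Matrix (Fin m) (Fin n) ℝ) (Xh : Matrix (Fin n) (Fin K) ℝ)
    (Ch : Matrix (Fin n) (Fin n) ℝ) (hCh : Ch = Xh * Xhᵀ)
    (T : Matrix (Fin K) (Fin K) ℝ) (hT : T = (1 + (H * Xh)ᵀ * Γ⁻¹ * (H * Xh))⁻¹)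
    (hTpsd : T.PosSemidef)
    (S : Matrix (Fin m) (Fin m) ℝ) (hS : S = H * Ch * Hᵀ + Γ)
    (Kg : Matrix (Fin n) (Fin m) ℝ) (hKg : Kg = Ch * Hᵀ * S⁻¹)
    (X : Matrix (Fin n) (Fin K) ℝ) (hX : X = Xh * hTpsd.sqrt) :
    X * Xᵀ = (1 - Kg * H) * Ch := by
  set B := H * Xh
  have hS_eq : S = B * Bᵀ + Γ := by
    rw [hS, hCh]
    simp only [B, transpose_mul, Matrix.mul_assoc]
  have hS_posDef : (B * Bᵀ + Γ).PosDef := by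
    simpa using PosDef.posSemidef_add (posSemidef_self_mul_conjTranspose B) hΓ
  have hT_eq : T = 1 - Bᵀ * S⁻¹ * B := by
    rw [hT, hS_eq, one_add_mul_inv_mul_inv_eq_sub _ _ _ hΓ.isUnit hS_posDef.isUnit]
  rw [hX, hTpsd.mul_sqrt_mul_transpose, hT_eq, hKg, hCh]
  simp only [B, transpose_mul, Matrix.mul_sub, Matrix.sub_mul, Matrix.mul_one, Matrix.one_mul,
    Matrix.mul_assoc]
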